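/- Let λ > 0, κ ≥ 1, and let Σ = VDVᵀ be a p×p positive semidefinite matrix, where V is a p×d real matrix with VᵀV = I_d and D is a d×d diagonal matrix whose diagonal entries all lie in the interval [λ, κλ]. For a subset S of {1,...,p}, let J_S be the p×p diagonal matrix with (J_S)_{ii} = 1 if i ∈ S and 0 otherwise, and let Σ_S = J_S Σ J_S. If ‖J_S V − V‖_F ≤ 1/(8κ), then ‖Σ − Σ_S‖_F ≤ λ/4, and moreover for every p×d matrix V₁ with V₁ᵀV₁ = I_d and every d×d diagonal matrix D₁ with Σ_S = V₁D₁V₁ᵀ, one has ‖VVᵀ − V₁V₁ᵀ‖_F ≤ 8κ ‖J_S V − V‖_F. -/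
import Mathlib


open Matrix

/-- Frobenius norm of a real matrix: `‖M‖_F = (tr (M Mᵀ))^{1/2}`. -/
noncomputable def frobNorm {m n : Type*} [Fintype m] [Fintype n]
    (M : Matrix m n ℝ) : ℝ :=
  Real.sqrt (Matrix.trace (M * Mᵀ))

/-- The diagonal indicator matrix `J_S` of a subset `S ⊆ {1,...,p}`. -/
def indicatorMatrix {p : ℕ} (S : Finset (Fin p)) : Matrix (Fin p) (Fin p) ℝ :=
  Matrix.diagonal fun i => if i ∈ S then 1 else 0

section FrobLemmas

variable {m n q : Type*} [Fintype m] [Fintype n] [Fintype q]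

lemma tr_sq (M : Matrix m n ℝ) : trace (M * Mᵀ) = ∑ i, ∑ j, (M i j)^2 := by
  simp [Matrix.trace, Matrix.mul_apply, Matrix.diag, sq]

lemma tr_self_nonneg (M : Matrix m n ℝ) : 0 ≤ trace (M * Mᵀ) := by
  rw [tr_sq]; positivity

lemma frobNorm_nonneg' (M : Matrix m n ℝ) : 0 ≤ frobNorm M := Real.sqrt_nonneg _

lemma frob_mono {M : Matrix m n ℝ} {N : Matrix m q ℝ}
    (h : trace (M * Mᵀ) ≤ trace (N * Nᵀ)) : frobNorm M ≤ frobNorm N :=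
  Real.sqrt_le_sqrt h

lemma frob_transpose (M : Matrix m n ℝ) : frobNorm Mᵀ = frobNorm M := by
  unfold frobNorm
  rw [transpose_transpose, trace_mul_comm]

attribute [local instance] Matrix.frobeniusSeminormedAddCommGroup

lemma frob_eq_norm (M : Matrix m n ℝ) : frobNorm M = ‖M‖ := by
  rw [Matrix.frobenius_norm_def, frobNorm, tr_sq, Real.sqrt_eq_rpow]
  congr 1
  simp [Real.norm_eq_abs, sq_abs]

lemma frob_add_le (M N : Matrix m n ℝ) :
    frobNorm (M + N) ≤ frobNorm M + frobNorm N := by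
  rw [frob_eq_norm, frob_eq_norm, frob_eq_norm]
  exact norm_add_le M N

lemma tr_conj_idem_nonneg [DecidableEq n] (X : Matrix m n ℝ) (R : Matrix n n ℝ)
    (hs : Rᵀ = R) (hi : R * R = R) : 0 ≤ trace (X * R * Xᵀ) := by
  have h : X * R * Xᵀ = (X * R) * (X * R)ᵀ := by
    rw [transpose_mul, hs]
    simp only [Matrix.mul_assoc]
    rw [← Matrix.mul_assoc R R, hi]
  rw [h]; exact tr_self_nonneg _

lemma tr_conj_idem_le [DecidableEq n] (X : Matrix m n ℝ) (R : Matrix n n ℝ)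
    (hs : Rᵀ = R) (hi : R * R = R) : trace (X * R * Xᵀ) ≤ trace (X * Xᵀ) := by
  have h1 : (1 - R)ᵀ = 1 - R := by rw [transpose_sub, transpose_one, hs]
  have h2 : (1 - R) * (1 - R) = 1 - R := by
    rw [Matrix.mul_sub, Matrix.sub_mul, Matrix.sub_mul, hi]
    simp
  have h3 : 0 ≤ trace (X * (1 - R) * Xᵀ) := tr_conj_idem_nonneg X _ h1 h2
  have h4 : X * (1 - R) * Xᵀ = X * Xᵀ - X * R * Xᵀ := by
    rw [Matrix.mul_sub, Matrix.mul_one, Matrix.sub_mul]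
  rw [h4, trace_sub] at h3
  linarith

lemma frob_mul_idem_le [DecidableEq n] (X : Matrix m n ℝ) (R : Matrix n n ℝ)
    (hs : Rᵀ = R) (hi : R * R = R) : frobNorm (X * R) ≤ frobNorm X := by
  apply frob_mono
  have e : (X * R) * (X * R)ᵀ = X * R * Xᵀ := by
    rw [transpose_mul, hs]
    simp only [Matrix.mul_assoc]
    rw [← Matrix.mul_assoc R R, hi]
  rw [e]
  exact tr_conj_idem_le X R hs hi

lemma frob_idem_mul_le [DecidableEq m] (X : Matrix m n ℝ) (R : Matrix m m ℝ)
    (hs : Rᵀ = R) (hi : R * R = R) : frobNorm (R * X) ≤ frobNorm X := by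
  have e : frobNorm (R * X) = frobNorm ((R * X)ᵀ) := (frob_transpose _).symm
  have e2 : frobNorm X = frobNorm Xᵀ := (frob_transpose _).symm
  rw [e, e2, transpose_mul, hs]
  exact frob_mul_idem_le Xᵀ R hs hi

lemma frob_mul_transpose_orth {d : Type*} [Fintype d] [DecidableEq d]
    (X : Matrix m d ℝ) (V : Matrix n d ℝ) (hV : Vᵀ * V = 1) :
    frobNorm (X * Vᵀ) = frobNorm X := by
  unfold frobNorm
  congr 1
  rw [transpose_mul, transpose_transpose]
  simp only [Matrix.mul_assoc]
  rw [← Matrix.mul_assoc Vᵀ V, hV, Matrix.one_mul]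

lemma frob_mul_orth_le {d : Type*} [Fintype d] [DecidableEq d] [DecidableEq n]
    (X : Matrix m n ℝ) (V : Matrix n d ℝ) (hV : Vᵀ * V = 1) :
    frobNorm (X * V) ≤ frobNorm X := by
  have hP1 : (V * Vᵀ)ᵀ = V * Vᵀ := by rw [transpose_mul, transpose_transpose]
  have hP2 : (V * Vᵀ) * (V * Vᵀ) = V * Vᵀ := by
    simp only [Matrix.mul_assoc]
    rw [← Matrix.mul_assoc Vᵀ V, hV, Matrix.one_mul]
  apply frob_mono
  have e : (X * V) * (X * V)ᵀ = X * (V * Vᵀ) * Xᵀ := by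
    rw [transpose_mul]
    simp only [Matrix.mul_assoc]
  rw [e]
  exact tr_conj_idem_le X _ hP1 hP2

lemma frob_mul_diag_le {d : Type*} [Fintype d] [DecidableEq d]
    (M : Matrix m d ℝ) (w : d → ℝ) (c : ℝ) (hc : 0 ≤ c) (h : ∀ j, |w j| ≤ c) :
    frobNorm (M * Matrix.diagonal w) ≤ c * frobNorm M := by
  have key : trace ((M * diagonal w) * (M * diagonal w)ᵀ) ≤ c^2 * trace (M * Mᵀ) := by
    rw [tr_sq, tr_sq, Finset.mul_sum]
    apply Finset.sum_le_sum; intro i _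
    rw [Finset.mul_sum]
    apply Finset.sum_le_sum; intro j _
    rw [Matrix.mul_diagonal]
    have h1 : (w j)^2 ≤ c^2 := sq_le_sq' (by linarith [(abs_le.mp (h j)).1]) (abs_le.mp (h j)).2
    nlinarith [sq_nonneg (M i j), sq_nonneg (M i j * w j)]
  calc frobNorm (M * diagonal w) ≤ Real.sqrt (c^2 * trace (M * Mᵀ)) := Real.sqrt_le_sqrt key
    _ = c * frobNorm M := by
        rw [Real.sqrt_mul (sq_nonneg c), Real.sqrt_sq hc, frobNorm]

lemma frob_mul_diag_ge {d : Type*} [Fintype d] [DecidableEq d]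
    (M : Matrix m d ℝ) (w : d → ℝ) (c : ℝ) (hc : 0 ≤ c) (h : ∀ j, c ≤ w j) :
    c * frobNorm M ≤ frobNorm (M * Matrix.diagonal w) := by
  have key : c^2 * trace (M * Mᵀ) ≤ trace ((M * diagonal w) * (M * diagonal w)ᵀ) := by
    rw [tr_sq, tr_sq, Finset.mul_sum]
    apply Finset.sum_le_sum; intro i _
    rw [Finset.mul_sum]
    apply Finset.sum_le_sum; intro j _
    rw [Matrix.mul_diagonal]
    nlinarith [h j, sq_nonneg (M i j), sq_nonneg (M i j * w j), sq_nonneg (w j - c),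
      mul_le_mul_of_nonneg_left (h j) hc]
  calc c * frobNorm M = Real.sqrt (c^2 * trace (M * Mᵀ)) := by
        rw [Real.sqrt_mul (sq_nonneg c), Real.sqrt_sq hc, frobNorm]
    _ ≤ _ := Real.sqrt_le_sqrt key

lemma frob_indicator_mul_le {p : ℕ} (S : Finset (Fin p)) {d : Type*} [Fintype d]
    (X : Matrix (Fin p) d ℝ) :
    frobNorm (indicatorMatrix S * X) ≤ frobNorm X := by
  apply Real.sqrt_le_sqrt
  rw [tr_sq, tr_sq]
  apply Finset.sum_le_sum; intro i _
  apply Finset.sum_le_sum; intro j _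
  rw [indicatorMatrix, Matrix.diagonal_mul]
  by_cases h : i ∈ S <;> simp [h] <;> positivity

lemma indicator_transpose {p : ℕ} (S : Finset (Fin p)) :
    (indicatorMatrix S)ᵀ = indicatorMatrix S := by
  rw [indicatorMatrix, Matrix.diagonal_transpose]

end FrobLemmas

set_option maxHeartbeats 1600000 in
/-- Let `λ > 0`, `κ ≥ 1`, and `Σ = VDVᵀ` with `V` a `p×d` matrix with
orthonormal columns and `D` diagonal with entries in `[λ, κλ]`. Let `Σ_S = J_S Σ J_S`.
If `‖J_S V − V‖_F ≤ 1/(8κ)`, then `‖Σ − Σ_S‖_F ≤ λ/4`, and moreover for every `p×d` matrix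
`V₁` with orthonormal columns and every diagonal `D₁` with `Σ_S = V₁D₁V₁ᵀ`,
`‖VVᵀ − V₁V₁ᵀ‖_F ≤ 8κ‖J_S V − V‖_F.` -/
theorem frobNorm_indicator_conj_eigendecomp (p d : ℕ) (lam κ : ℝ)
    (hlam : 0 < lam) (hκ : 1 ≤ κ)
    (V : Matrix (Fin p) (Fin d) ℝ) (hV : Vᵀ * V = 1)
    (dvec : Fin d → ℝ) (hdvec : ∀ i, lam ≤ dvec i ∧ dvec i ≤ κ * lam)
    (S : Finset (Fin p))
    (hclose : frobNorm (indicatorMatrix S * V - V) ≤ 1 / (8 * κ)) :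
    frobNorm (V * Matrix.diagonal dvec * Vᵀ -
        indicatorMatrix S * (V * Matrix.diagonal dvec * Vᵀ) * indicatorMatrix S)
      ≤ lam / 4 ∧
    ∀ (V₁ : Matrix (Fin p) (Fin d) ℝ) (d₁ : Fin d → ℝ),
      V₁ᵀ * V₁ = 1 →
      indicatorMatrix S * (V * Matrix.diagonal dvec * Vᵀ) * indicatorMatrix S
        = V₁ * Matrix.diagonal d₁ * V₁ᵀ →
      frobNorm (V * Vᵀ - V₁ * V₁ᵀ) ≤ 8 * κ * frobNorm (indicatorMatrix S * V - V) := by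
  have hκ0 : (0 : ℝ) < κ := lt_of_lt_of_le one_pos hκ
  set J := indicatorMatrix S with hJ
  set Dm := Matrix.diagonal dvec with hDm
  set ε := frobNorm (J * V - V) with hε
  have εnn : 0 ≤ ε := frobNorm_nonneg' _
  have hJs : Jᵀ = J := indicator_transpose S
  have hκlam : (0:ℝ) ≤ κ * lam := by positivity
  -- bound on the two pieces
  have habs : ∀ j, |dvec j| ≤ κ * lam := by
    intro j
    rcases hdvec j with ⟨h1, h2⟩
    rw [abs_le]
    constructor <;> nlinarith
  have hVJV : frobNorm (V - J * V) = ε := by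
    rw [show V - J * V = -(J * V - V) by abel, hε]
    unfold frobNorm
    rw [transpose_neg, Matrix.neg_mul, Matrix.mul_neg, neg_neg]
  have b1 : frobNorm (((V - J * V) * Dm) * Vᵀ) ≤ κ * lam * ε := by
    rw [frob_mul_transpose_orth _ V hV]
    calc frobNorm ((V - J * V) * Dm) ≤ κ * lam * frobNorm (V - J * V) :=
          frob_mul_diag_le _ _ _ hκlam habs
      _ = κ * lam * ε := by rw [hVJV]
  have b2 : frobNorm (J * ((V * Dm) * (V - J * V)ᵀ)) ≤ κ * lam * ε := by
    calc frobNorm (J * ((V * Dm) * (V - J * V)ᵀ))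
        ≤ frobNorm ((V * Dm) * (V - J * V)ᵀ) := frob_indicator_mul_le S _
      _ = frobNorm (((V * Dm) * (V - J * V)ᵀ)ᵀ) := (frob_transpose _).symm
      _ = frobNorm (((V - J * V) * Dm) * Vᵀ) := by
          rw [transpose_mul, transpose_transpose, transpose_mul, hDm,
            Matrix.diagonal_transpose, Matrix.mul_assoc]
      _ ≤ κ * lam * ε := b1
  have hid : V * Dm * Vᵀ - J * (V * Dm * Vᵀ) * J
      = ((V - J * V) * Dm) * Vᵀ + J * ((V * Dm) * (V - J * V)ᵀ) := by
    have ht : (V - J * V)ᵀ = Vᵀ - Vᵀ * J := by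
      rw [transpose_sub, transpose_mul, hJs]
    rw [ht]
    simp only [Matrix.sub_mul, Matrix.mul_sub, Matrix.mul_assoc]
    abel
  have hZ : frobNorm (V * Dm * Vᵀ - J * (V * Dm * Vᵀ) * J) ≤ 2 * κ * lam * ε := by
    rw [hid]
    calc frobNorm (((V - J * V) * Dm) * Vᵀ + J * ((V * Dm) * (V - J * V)ᵀ))
        ≤ frobNorm (((V - J * V) * Dm) * Vᵀ) + frobNorm (J * ((V * Dm) * (V - J * V)ᵀ)) :=
          frob_add_le _ _
      _ ≤ 2 * κ * lam * ε := by linarith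
  constructor
  · have h24 : 2 * κ * lam * ε ≤ 2 * κ * lam * (1 / (8 * κ)) := by
      apply mul_le_mul_of_nonneg_left hclose (by positivity)
    have h25 : 2 * κ * lam * (1 / (8 * κ)) = lam / 4 := by
      field_simp
      ring
    calc frobNorm (V * Dm * Vᵀ - J * (V * Dm * Vᵀ) * J) ≤ 2 * κ * lam * ε := hZ
      _ ≤ lam / 4 := by rw [h25] at h24; exact h24
  · intro V₁ d₁ hV₁ hdec
    set Q := V₁ * V₁ᵀ with hQ
    have hQs : Qᵀ = Q := by rw [hQ, transpose_mul, transpose_transpose]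
    have hQi : Q * Q = Q := by
      rw [hQ]
      simp only [Matrix.mul_assoc]
      rw [← Matrix.mul_assoc V₁ᵀ V₁, hV₁, Matrix.one_mul]
    have hRs : (1 - Q)ᵀ = 1 - Q := by rw [transpose_sub, transpose_one, hQs]
    have hRi : (1 - Q) * (1 - Q) = 1 - Q := by
      rw [Matrix.mul_sub, Matrix.sub_mul, Matrix.sub_mul, hQi]
      simp
    set Z := V * Dm * Vᵀ - J * (V * Dm * Vᵀ) * J with hZdef
    set W := (J * (V * Dm * Vᵀ) * J) * V with hW
    have hSV : (V * Dm * Vᵀ) * V = V * Dm := by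
      rw [Matrix.mul_assoc, hV, Matrix.mul_one]
    have hZV : Z * V = V * Dm - W := by
      rw [hZdef, Matrix.sub_mul, hSV, hW]
    have hQW : Q * W = W := by
      rw [hW, hdec, hQ]
      simp only [Matrix.mul_assoc]
      rw [← Matrix.mul_assoc V₁ᵀ V₁, hV₁, Matrix.one_mul]
    have hkey : (V - Q * V) * Dm = (1 - Q) * (Z * V) := by
      rw [Matrix.sub_mul 1 Q (Z * V), Matrix.one_mul, hZV, Matrix.mul_sub, hQW,
        Matrix.sub_mul V (Q * V) Dm]
      simp only [Matrix.mul_assoc]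
      abel
    have hchain : lam * frobNorm (V - Q * V) ≤ 2 * κ * lam * ε := by
      calc lam * frobNorm (V - Q * V) ≤ frobNorm ((V - Q * V) * Dm) :=
            frob_mul_diag_ge _ _ _ hlam.le (fun j => (hdvec j).1)
        _ = frobNorm ((1 - Q) * (Z * V)) := by rw [hkey]
        _ ≤ frobNorm (Z * V) := frob_idem_mul_le _ _ hRs hRi
        _ ≤ frobNorm Z := frob_mul_orth_le _ V hV
        _ ≤ 2 * κ * lam * ε := hZ
    have hA : frobNorm (V - Q * V) ≤ 2 * κ * ε := by
      have h := hchain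
      nlinarith [frobNorm_nonneg' (V - Q * V)]
    -- trace identity
    set P := V * Vᵀ with hP
    have hPs : Pᵀ = P := by rw [hP, transpose_mul, transpose_transpose]
    have hPi : P * P = P := by
      rw [hP]
      simp only [Matrix.mul_assoc]
      rw [← Matrix.mul_assoc Vᵀ V, hV, Matrix.one_mul]
    have htrP : trace P = trace Q := by
      rw [hP, hQ, trace_mul_comm, hV, trace_mul_comm, hV₁]
    have tL : trace ((P - Q) * (P - Q)ᵀ)
        = trace P + trace Q - 2 * trace (P * Q) := by
      rw [transpose_sub, hPs, hQs, Matrix.sub_mul, Matrix.mul_sub, Matrix.mul_sub,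
        trace_sub, trace_sub, trace_sub, hPi, hQi, trace_mul_comm Q P]
      ring
    have tR : trace ((V - Q * V) * (V - Q * V)ᵀ) = trace P - trace (P * Q) := by
      have e1 : (V - Q * V) * (V - Q * V)ᵀ = (1 - Q) * (P * (1 - Q)) := by
        have h' : V - Q * V = (1 - Q) * V := by rw [Matrix.sub_mul, Matrix.one_mul]
        rw [h', transpose_mul, hRs, hP]
        simp only [Matrix.mul_assoc]
      rw [e1, trace_mul_comm, Matrix.mul_assoc, hRi, Matrix.mul_sub, Matrix.mul_one,
        trace_sub]
    have htr : trace ((P - Q) * (P - Q)ᵀ) = 2 * trace ((V - Q * V) * (V - Q * V)ᵀ) := by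
      rw [tL, tR, htrP]
      ring
    have hfin : frobNorm (P - Q) = Real.sqrt 2 * frobNorm (V - Q * V) := by
      rw [frobNorm, htr, Real.sqrt_mul (by norm_num : (0:ℝ) ≤ 2), frobNorm]
    have h2le : Real.sqrt 2 ≤ 2 := by
      nlinarith [Real.sq_sqrt (by norm_num : (0:ℝ) ≤ 2), Real.sqrt_nonneg 2]
    have : frobNorm (P - Q) ≤ 8 * κ * ε := by
      rw [hfin]
      have hm : Real.sqrt 2 * frobNorm (V - Q * V) ≤ 2 * (2 * κ * ε) :=
        mul_le_mul h2le hA (frobNorm_nonneg' _) (by norm_num)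
      nlinarith [mul_nonneg hκ0.le εnn]
    exact this
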